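/- arXiv:math/0607745 — 2 statements merged into one kernel-verified Lean document; each statement's English description precedes it below -/
import Mathlib

section
/- Let ω : 𝒜 → ℂ⟦λ⟧ be a positive ℂ⟦λ⟧-linear functional on a unital *-algebra 𝒜 over ℂ⟦λ⟧. Then for all a, b ∈ 𝒜 the Cauchy–Schwarz inequality holds: ω(a* b) · (ω(a* b))* ≤ ω(a* a) · ω(b* b) in the ordered ring ℝ⟦λ⟧. -/
noncomputable def conjPS : PowerSeries ℂ →+* PowerSeries ℂ :=
  PowerSeries.map (starRingEnd ℂ)

noncomputable def PosR (a : PowerSeries ℝ) : Prop :=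
  a ≠ 0 ∧ 0 < PowerSeries.coeff a.order.toNat a

noncomputable def leR (x y : PowerSeries ℂ) : Prop :=
  ∃ d : PowerSeries ℝ, y - x = PowerSeries.map (algebraMap ℝ ℂ) d ∧ (d = 0 ∨ PosR d)

/-!
Realize `ℝ⟦λ⟧` as the linearly ordered ring `Lex (HahnSeries ℕ ℝ)`. Polarization turns positivity
of `ω` into hermiticity, `ω (b* a) = (ω (a* b))*`. Writing `z = ω (a* b)`, `W = z z*`,
`P = ω (a* a)`, `Y = ω (b* b)`, positivity at `-(σ z) a + τ b` for real `σ, τ` says that the binary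
form `W P σ² - 2 W σ τ + Y τ²` is nonnegative, so its discriminant gives `W² ≤ W (P Y)`, whence
`W ≤ P Y`. Since `ℝ⟦λ⟧` is neither a field nor Archimedean, the discriminant bound is obtained by
evaluating the form at well-chosen points rather than by completing the square.
-/

open PowerSeries

theorem sq_le_mul_of_forall_quadratic_nonneg {R : Type*} [CommRing R] [LinearOrder R]
    [IsStrictOrderedRing R] {A B C : R} (h : ∀ σ τ : R, 0 ≤ A * σ ^ 2 + 2 * B * σ * τ + C * τ ^ 2) :
    B ^ 2 ≤ A * C := by
  have hA : 0 ≤ A := by simpa using h 1 0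
  rcases (show 0 ≤ C by simpa using h 0 1).eq_or_lt with rfl | hC
  · -- at `σ = B`, `τ = -(A + 1)` the form is `-(A + 2) B²`
    have := h B (-(A + 1))
    nlinarith [sq_nonneg B]
  · -- at `σ = C`, `τ = -B` the form is `C (A C - B²)`
    refine le_of_mul_le_mul_left ?_ hC
    linear_combination h C (-B)

theorem le_of_sq_le_mul {R : Type*} [CommRing R] [LinearOrder R] [IsStrictOrderedRing R]
    {W X : R} (h : W ^ 2 ≤ W * X) (hX : 0 ≤ X) : W ≤ X := by
  rcases le_or_gt W 0 with hW | hW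
  · exact hW.trans hX
  · exact le_of_mul_le_mul_left (by rwa [← sq]) hW

theorem posR_iff_exists_coeff (d : PowerSeries ℝ) :
    PosR d ↔ ∃ n : ℕ, (∀ m < n, coeff m d = 0) ∧ 0 < coeff n d := by
  constructor
  · rintro ⟨hd, hpos⟩
    obtain ⟨N, hN⟩ := ENat.ne_top_iff_exists.1 (order_finite_iff_ne_zero.2 hd).ne
    rw [← hN, ENat.toNat_natCast] at hpos
    exact ⟨N, fun m hm => coeff_of_lt_order m (by rw [← hN]; exact_mod_cast hm), hpos⟩
  · rintro ⟨n, hlow, hpos⟩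
    have horder : d.order = n := order_eq_nat.2 ⟨hpos.ne', hlow⟩
    refine ⟨fun h => by simp [h] at hpos, ?_⟩
    rwa [horder, ENat.toNat_natCast]

theorem posR_iff_pos (d : PowerSeries ℝ) :
    PosR d ↔ 0 < toLex (HahnSeries.toPowerSeries.symm d) := by
  simp [posR_iff_exists_coeff, HahnSeries.lt_iff, eq_comm]

noncomputable def realEmb : Lex (HahnSeries ℕ ℝ) →+* PowerSeries ℂ where
  toFun r := map (algebraMap ℝ ℂ) (HahnSeries.toPowerSeries (ofLex r))
  map_one' := by simp only [ofLex_one, map_one]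
  map_mul' r s := by simp only [ofLex_mul, map_mul]
  map_zero' := by simp only [ofLex_zero, map_zero]
  map_add' r s := by simp only [ofLex_add, map_add]

theorem realEmb_toLex_toPowerSeries_symm (d : PowerSeries ℝ) :
    realEmb (toLex (HahnSeries.toPowerSeries.symm d)) = map (algebraMap ℝ ℂ) d := by
  rw [realEmb, RingHom.coe_mk, MonoidHom.coe_mk, OneHom.coe_mk, ofLex_toLex,
    RingEquiv.apply_symm_apply]

theorem leR_iff {x y : PowerSeries ℂ} :
    leR x y ↔ ∃ r : Lex (HahnSeries ℕ ℝ), y - x = realEmb r ∧ 0 ≤ r := by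
  constructor
  · rintro ⟨d, hd, hnn⟩
    refine ⟨toLex (HahnSeries.toPowerSeries.symm d),
      by rw [hd, realEmb_toLex_toPowerSeries_symm], ?_⟩
    rcases hnn with rfl | h
    · simp
    · exact ((posR_iff_pos d).1 h).le
  · rintro ⟨r, hr, hr0⟩
    obtain ⟨d, rfl⟩ : ∃ d, toLex (HahnSeries.toPowerSeries.symm d) = r :=
      ⟨HahnSeries.toPowerSeries (ofLex r), by rw [RingEquiv.symm_apply_apply, toLex_ofLex]⟩
    refine ⟨d, by rwa [← realEmb_toLex_toPowerSeries_symm], ?_⟩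
    rcases hr0.eq_or_lt with h | h
    · left
      simpa using h.symm
    · exact .inr ((posR_iff_pos d).2 h)

theorem leR_zero_iff {x : PowerSeries ℂ} :
    leR 0 x ↔ ∃ r : Lex (HahnSeries ℕ ℝ), x = realEmb r ∧ 0 ≤ r := by
  simp [leR_iff]

theorem realEmb_injective : Function.Injective realEmb :=
  (map_injective _ (algebraMap ℝ ℂ).injective).comp
    (HahnSeries.toPowerSeries.injective.comp ofLex.injective)

theorem conjPS_realEmb (r : Lex (HahnSeries ℕ ℝ)) : conjPS (realEmb r) = realEmb r := by
  ext n
  simp [conjPS, realEmb]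

theorem conjPS_conjPS (x : PowerSeries ℂ) : conjPS (conjPS x) = x := by
  ext n
  simp [conjPS]

theorem exists_eq_realEmb_of_conjPS_eq {x : PowerSeries ℂ} (h : conjPS x = x) :
    ∃ r, x = realEmb r := by
  refine ⟨toLex (HahnSeries.toPowerSeries.symm (mk fun n => (coeff n x).re)), ?_⟩
  rw [realEmb_toLex_toPowerSeries_symm]
  ext n
  have hn : starRingEnd ℂ (coeff n x) = coeff n x := by
    simpa [conjPS] using congrArg (coeff n) h
  rw [coeff_map, coeff_mk, Complex.coe_algebraMap, Complex.conj_eq_iff_re.1 hn]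

theorem conjPS_eq_of_leR_zero {x : PowerSeries ℂ} (hx : leR 0 x) : conjPS x = x := by
  obtain ⟨r, rfl, -⟩ := leR_zero_iff.1 hx
  exact conjPS_realEmb r

section StarAlgebra

variable {𝒜 : Type*} [Ring 𝒜] [Algebra (PowerSeries ℂ) 𝒜] [StarRing 𝒜]

theorem map_star_smul_add_mul
    (hantilinear : ∀ (c : PowerSeries ℂ) (a : 𝒜), star (c • a) = conjPS c • star a)
    (ω : 𝒜 →ₗ[PowerSeries ℂ] PowerSeries ℂ) (s t : PowerSeries ℂ) (a b : 𝒜) :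
    ω (star (s • a + t • b) * (s • a + t • b)) =
      conjPS s * s * ω (star a * a) + conjPS s * t * ω (star a * b) +
        conjPS t * s * ω (star b * a) + conjPS t * t * ω (star b * b) := by
  simp only [star_add, hantilinear, add_mul, mul_add, smul_mul_assoc, mul_smul_comm, map_add,
    map_smul, smul_eq_mul]
  ring

theorem conjPS_map_star_mul
    (hantilinear : ∀ (c : PowerSeries ℂ) (a : 𝒜), star (c • a) = conjPS c • star a)
    (ω : 𝒜 →ₗ[PowerSeries ℂ] PowerSeries ℂ)
    (hreal : ∀ c : 𝒜, conjPS (ω (star c * c)) = ω (star c * c)) (a b : 𝒜) :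
    conjPS (ω (star a * b)) = ω (star b * a) := by
  set i : PowerSeries ℂ := C Complex.I
  have hi : i * i = -1 := by rw [← map_mul, Complex.I_mul_I, map_neg, map_one]
  have hconj_i : conjPS i = -i := by rw [conjPS, map_C, Complex.conj_I, map_neg]
  have h₁ := hreal ((1 : PowerSeries ℂ) • a + (1 : PowerSeries ℂ) • b)
  have h₂ := hreal (i • a + (1 : PowerSeries ℂ) • b)
  simp only [map_star_smul_add_mul hantilinear, map_add, map_mul, map_one, hconj_i, map_neg,
    hreal a, hreal b] at h₁ h₂
  have htwo : (2 : PowerSeries ℂ) ≠ 0 := by rw [← map_ofNat C 2]; simp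
  refine mul_left_cancel₀ htwo ?_
  linear_combination h₁ - i * h₂ +
    (conjPS (ω (star a * b)) - conjPS (ω (star b * a)) - ω (star b * a) + ω (star a * b)) * hi

theorem nonneg_quadratic_form
    (hantilinear : ∀ (c : PowerSeries ℂ) (a : 𝒜), star (c • a) = conjPS c • star a)
    (ω : 𝒜 →ₗ[PowerSeries ℂ] PowerSeries ℂ) (hpos : ∀ a : 𝒜, leR 0 (ω (star a * a)))
    {a b : 𝒜} {P Y W : Lex (HahnSeries ℕ ℝ)} (hP : ω (star a * a) = realEmb P)
    (hY : ω (star b * b) = realEmb Y)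
    (hW : ω (star a * b) * conjPS (ω (star a * b)) = realEmb W) (σ τ : Lex (HahnSeries ℕ ℝ)) :
    0 ≤ W * P * σ ^ 2 + 2 * -W * σ * τ + Y * τ ^ 2 := by
  set z := ω (star a * b)
  obtain ⟨r, hr, hr0⟩ :=
    leR_zero_iff.1 (hpos ((-(realEmb σ * z)) • a + realEmb τ • b))
  rw [map_star_smul_add_mul hantilinear,
    ← conjPS_map_star_mul hantilinear ω (fun c => conjPS_eq_of_leR_zero (hpos c)) a b] at hr
  suffices realEmb r = realEmb (W * P * σ ^ 2 + 2 * -W * σ * τ + Y * τ ^ 2) by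
    rwa [← realEmb_injective this]
  simp only [map_add, map_mul, map_neg, map_pow, map_ofNat, conjPS_realEmb] at hr ⊢
  rw [← hr, hP, hY]
  linear_combination (realEmb σ ^ 2 * realEmb P - 2 * realEmb σ * realEmb τ) * hW

end StarAlgebra

/-- Cauchy–Schwarz inequality for a positive `ℂ⟦λ⟧`-linear functional `ω` on a unital
`*`-algebra `𝒜` over `ℂ⟦λ⟧`: for all `a b`,
`ω(a* b) · (ω(a* b))* ≤ ω(a* a) · ω(b* b)` in the ordered ring `ℝ⟦λ⟧`. -/
theorem stmt3 {𝒜 : Type*} [Ring 𝒜] [Algebra (PowerSeries ℂ) 𝒜] [StarRing 𝒜]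
    (hantilinear : ∀ (c : PowerSeries ℂ) (a : 𝒜), star (c • a) = conjPS c • star a)
    (ω : 𝒜 →ₗ[PowerSeries ℂ] PowerSeries ℂ)
    (hpos : ∀ a : 𝒜, leR 0 (ω (star a * a))) :
    ∀ a b : 𝒜,
      leR (ω (star a * b) * conjPS (ω (star a * b))) (ω (star a * a) * ω (star b * b)) := by
  intro a b
  obtain ⟨P, hP, hP0⟩ := leR_zero_iff.1 (hpos a)
  obtain ⟨Y, hY, hY0⟩ := leR_zero_iff.1 (hpos b)
  obtain ⟨W, hW⟩ := exists_eq_realEmb_of_conjPS_eq (x := ω (star a * b) * conjPS (ω (star a * b)))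
    (by rw [map_mul, conjPS_conjPS, mul_comm])
  have hdiscrim :=
    sq_le_mul_of_forall_quadratic_nonneg (nonneg_quadratic_form hantilinear ω hpos hP hY hW)
  have hWPY : W ≤ P * Y :=
    le_of_sq_le_mul (by linear_combination hdiscrim) (mul_nonneg hP0 hY0)
  exact leR_iff.2 ⟨P * Y - W, by rw [hP, hY, hW, map_sub, map_mul], sub_nonneg.2 hWPY⟩
end

section
/- Let 𝒜 be a unital *-algebra over ℂ and ⋆ a Hermitean formal deformation of 𝒜. If ω = Σ_{r≥0} λ^r ω_r : 𝒜⟦λ⟧ → ℂ⟦λ⟧ is a ℂ⟦λ⟧-linear functional (determined by ℂ-linear maps ω_r : 𝒜 → ℂ) that is positive with respect to ⋆, i.e. ω(a* ⋆ a) ≥ 0 in ℝ⟦λ⟧ for all a ∈ 𝒜⟦λ⟧, then its classical limit ω_0 is a positive linear functional on the undeformed algebra: ω_0(a* a) ≥ 0 for all a ∈ 𝒜. -/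
/-!
For `a ∈ 𝒜` viewed as a `λ`-independent series, the constant term of `ω(a* ⋆ a)` is
`ω₀(a* a)`, since `C 0` is the undeformed product; and a series that is `≥ 0` in `ℝ⟦λ⟧` has
nonnegative constant term, because the constant term is either the leading coefficient or zero.
-/

open scoped ComplexOrder

theorem PosR.coeff_zero_nonneg {d : PowerSeries ℝ} (hd : PosR d) :
    0 ≤ PowerSeries.coeff 0 d := by
  obtain ⟨-, hlead⟩ := hd
  by_cases hord : d.order = 0
  · simpa [hord] using hlead.le
  · rw [PowerSeries.coeff_of_lt_order 0 (by simpa using pos_iff_ne_zero.mpr hord)]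

theorem leR.coeff_zero_le {x y : PowerSeries ℂ} (h : leR x y) :
    PowerSeries.coeff 0 x ≤ PowerSeries.coeff 0 y := by
  obtain ⟨d, hd, hd0⟩ := h
  have hnonneg : 0 ≤ PowerSeries.coeff 0 d := by
    rcases hd0 with rfl | hpos
    · simp
    · exact hpos.coeff_zero_nonneg
  rw [← sub_nonneg, ← map_sub, hd, PowerSeries.coeff_map, Complex.coe_algebraMap]
  exact Complex.zero_le_real.mpr hnonneg

theorem stmt5_general {𝒜 : Type*} [Ring 𝒜] [Algebra ℂ 𝒜] [StarRing 𝒜]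
    (C : ℕ → 𝒜 →ₗ[ℂ] 𝒜 →ₗ[ℂ] 𝒜)
    (mul : (ℕ → 𝒜) → (ℕ → 𝒜) → (ℕ → 𝒜))
    (hmul : ∀ a b : ℕ → 𝒜, ∀ n : ℕ, mul a b n =
      ∑ p ∈ Finset.HasAntidiagonal.antidiagonal n, ∑ q ∈ Finset.HasAntidiagonal.antidiagonal p.2, C p.1 (a q.1) (b q.2))
    (hC0 : ∀ x y : 𝒜, C 0 x y = x * y)
    (ω : ℕ → 𝒜 →ₗ[ℂ] ℂ)
    (hpos : ∀ a : ℕ → 𝒜, leR 0 (PowerSeries.mk fun n =>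
      ∑ p ∈ Finset.HasAntidiagonal.antidiagonal n, ω p.1 (mul (fun m => star (a m)) a p.2))) :
    ∀ a : 𝒜, 0 ≤ ω 0 (star a * a) := by
  intro a
  set a₀ : ℕ → 𝒜 := fun n => if n = 0 then a else 0
  have hconst : PowerSeries.coeff 0 (PowerSeries.mk fun n =>
      ∑ p ∈ Finset.HasAntidiagonal.antidiagonal n, ω p.1 (mul (fun m => star (a₀ m)) a₀ p.2)) =
      ω 0 (star a * a) := by
    simp [a₀, hmul, hC0]
  simpa [hconst] using (hpos a₀).coeff_zero_le

/-- Let `𝒜` be a unital `*`-algebra over `ℂ` and `⋆` a Hermitean formal deformation of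
`𝒜`, given by `ℂ`-bilinear maps `C r : 𝒜 → 𝒜 → 𝒜` with `C 0` the original product.
Elements of `𝒜⟦λ⟧` are represented as sequences `ℕ → 𝒜` (the coefficients), the
deformed product is `(a ⋆ b)ₙ = ∑_{r+i+j=n} C r (aᵢ) (bⱼ)`, the involution is
coefficientwise (`λ* = λ`), and a `ℂ⟦λ⟧`-linear functional `ω = ∑ λ^r ω_r` is encoded
by its coefficient functionals `ω_r : 𝒜 → ℂ`, so that `ω(a)ₙ = ∑_{i+j=n} ω_i (aⱼ)`.
If `ω` is positive with respect to `⋆`, i.e. `ω(a* ⋆ a) ≥ 0` in `ℝ⟦λ⟧` for all `a`,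
then its classical limit `ω_0` is a positive linear functional on the undeformed
algebra: `ω_0(a* a) ≥ 0` for all `a ∈ 𝒜`. -/
theorem stmt5 {𝒜 : Type*} [Ring 𝒜] [Algebra ℂ 𝒜] [StarRing 𝒜] [StarModule ℂ 𝒜]
    (C : ℕ → 𝒜 →ₗ[ℂ] 𝒜 →ₗ[ℂ] 𝒜)
    (mul : (ℕ → 𝒜) → (ℕ → 𝒜) → (ℕ → 𝒜))
    (hmul : ∀ a b : ℕ → 𝒜, ∀ n : ℕ, mul a b n =
      ∑ p ∈ Finset.HasAntidiagonal.antidiagonal n, ∑ q ∈ Finset.HasAntidiagonal.antidiagonal p.2, C p.1 (a q.1) (b q.2))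
    (hC0 : ∀ x y : 𝒜, C 0 x y = x * y)
    (hassoc : ∀ a b c : ℕ → 𝒜, mul (mul a b) c = mul a (mul b c))
    (hone_left : ∀ a : ℕ → 𝒜, mul (fun n => if n = 0 then 1 else 0) a = a)
    (hone_right : ∀ a : ℕ → 𝒜, mul a (fun n => if n = 0 then 1 else 0) = a)
    (hstar : ∀ a b : ℕ → 𝒜,
      (fun n => star (mul a b n)) = mul (fun n => star (b n)) (fun n => star (a n)))
    (ω : ℕ → 𝒜 →ₗ[ℂ] ℂ)
    (hpos : ∀ a : ℕ → 𝒜, leR 0 (PowerSeries.mk fun n =>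
      ∑ p ∈ Finset.HasAntidiagonal.antidiagonal n, ω p.1 (mul (fun m => star (a m)) a p.2))) :
    ∀ a : 𝒜, 0 ≤ ω 0 (star a * a) :=
  stmt5_general C mul hmul hC0 ω hpos
end
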